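/- Let κ be an infinite regular cardinal, I a proper ideal on κ containing every bounded subset of κ, δ ≤ κ an ordinal, and D ⊆ I⁺ a set that is dense in I⁺ modulo bounded sets (for every Y ∈ I⁺ there is B ∈ D with B ∖ Y bounded). Suppose ≤_T is a partial order on D such that B ≤_T B' implies B' ∖ B is bounded, and for each B ∈ D the set of strict ≤_T-predecessors of B is well-ordered by ≤_T with order type (the rank of B) less than δ; that is, (D, ≤_T) is a downward-growing tree of height at most δ. Then for every A ∈ D there exists α < δ such that the set {B ∈ D : B ∖ A is bounded and the rank of B equals α} has cardinality at least κ⁺. -/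

import Mathlib

/-! If every level below `A` had at most `κ` nodes, the set `T` of `B ∈ D` with `B ∖ A`
bounded would have size at most `|δ| · κ = κ`. For `B ∈ T` the set `B ∩ A` is unbounded (else
`B ∈ I`), and a diagonal construction of length `κ`, using regularity, yields `Z` such that every
`B ∩ A` meets both `Z` and its complement unboundedly. One of `A ∩ Z`, `A ∖ Z` is `I`-positive;
density gives `B ∈ D` almost contained in it, so `B ∈ T`, and then `B ∩ A` meets the other piece
only boundedly. -/

open Cardinal

/-- A subset of the ordinals below `κ` (realized as the type `κ.ord.ToType`)
is bounded if it is contained in a proper initial segment. -/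
def Bdd {C : Type*} [Preorder C] (X : Set C) : Prop :=
  ∃ b : C, X ⊆ Set.Iio b

open Set

universe u

theorem not_bdd_iff_isCofinal {C : Type*} [LinearOrder C] {X : Set C} :
    ¬Bdd X ↔ IsCofinal X := by
  simp [Bdd, IsCofinal, subset_def]

theorem Bdd.mono {C : Type*} [Preorder C] {X Y : Set C} (h : X ⊆ Y) (hY : Bdd Y) : Bdd X :=
  let ⟨b, hb⟩ := hY
  ⟨b, h.trans hb⟩

theorem IsCofinal.exists_forall_lt_of_mk_lt_cof {α : Type*} [LinearOrder α] {G s : Set α}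
    (hG : IsCofinal G) (hs : #s < Order.cof α) : ∃ x ∈ G, ∀ y ∈ s, y < x := by
  obtain ⟨b, hb⟩ := not_isCofinal_iff.1 fun h => (Order.cof_le h).not_gt hs
  obtain ⟨x, hxG, hbx⟩ := hG b
  exact ⟨x, hxG, fun y hy => (hb y hy).trans_le hbx⟩

theorem Cardinal.IsRegular.isRegularCardinalOrder_toType {κ : Cardinal} (hκ : κ.IsRegular) :
    IsRegularCardinalOrder κ.ord.ToType :=
  ⟨by rw [Ordinal.type_toType, Ordinal.cof_toType, hκ.cof_ord]⟩

section RegularCardinalOrder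

variable {α : Type u} [LinearOrder α] [WellFoundedLT α] [IsRegularCardinalOrder α]

theorem exists_strictMono_forall_mem (G : α → Set α) (hG : ∀ s, IsCofinal (G s)) :
    ∃ z : α → α, StrictMono z ∧ ∀ s, z s ∈ G s := by
  have step : ∀ s (ih : ∀ t < s, α), ∃ x ∈ G s, ∀ t (h : t < s), ih t h < x := by
    intro s ih
    have hsmall : #(range fun t : Iio s => ih t t.2) < Order.cof α := by
      rw [Order.cof_eq_cardinalMk]
      exact mk_range_le.trans_lt (mk_Iio_lt s ord_cardinalMk)
    obtain ⟨x, hx, hlt⟩ := (hG s).exists_forall_lt_of_mk_lt_cof hsmall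
    exact ⟨x, hx, fun t h => hlt _ ⟨⟨t, h⟩, rfl⟩⟩
  let z : α → α := IsWellFounded.fix (· < ·) fun s ih => (step s ih).choose
  have hz : ∀ s, z s ∈ G s ∧ ∀ t < s, z t < z s := fun s => by
    simp only [z]
    rw [IsWellFounded.fix_eq]
    exact (step s _).choose_spec
  exact ⟨z, fun t s h => (hz s).2 t h, fun s => (hz s).1⟩

theorem exists_isCofinal_inter_and_isCofinal_sdiff (hα : ℵ₀ ≤ #α) {ι : Type u}
    (F : ι → Set α) (hι : #ι ≤ #α) (hF : ∀ i, IsCofinal (F i)) :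
    ∃ Z : Set α, ∀ i, IsCofinal (F i ∩ Z) ∧ IsCofinal (F i \ Z) := by
  cases isEmpty_or_nonempty ι with
  | inl _ => exact ⟨∅, isEmptyElim⟩
  | inr _ =>
  have : Nonempty α := mk_ne_zero_iff.1 (aleph0_pos.trans_le hα).ne'
  -- `q s = (i, c, true)` asks stage `s` to put a point of `F i` above `c` into `Z`,
  -- `q s = (i, c, false)` asks for such a point outside `Z`
  obtain ⟨q, hq⟩ : ∃ q : α → ι × α × Bool, Function.Surjective q := by
    have hle : #(ι × α × Bool) ≤ #α := by
      simp only [mk_prod, lift_id, lift_uzero, mk_bool, lift_ofNat]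
      calc #ι * (#α * 2) ≤ #α * (#α * #α) :=
            mul_le_mul' hι (mul_le_mul' le_rfl (ofNat_le_aleph0.trans hα))
        _ = #α := by rw [mul_eq_self hα, mul_eq_self hα]
    obtain ⟨f⟩ := hle
    exact ⟨Function.invFun f, Function.invFun_surjective f.injective⟩
  obtain ⟨z, hz_mono, hz⟩ := exists_strictMono_forall_mem
    (fun s => F (q s).1 ∩ Ici (q s).2.1) fun s c => by
      obtain ⟨y, hy, hcy⟩ := hF (q s).1 (max c (q s).2.1)
      exact ⟨y, ⟨hy, (le_max_right _ _).trans hcy⟩, (le_max_left _ _).trans hcy⟩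
  refine ⟨z '' {s | (q s).2.2 = true}, fun i => ⟨fun c => ?_, fun c => ?_⟩⟩
  · obtain ⟨s, hs⟩ := hq (i, c, true)
    have hzs := hz s
    rw [hs] at hzs
    exact ⟨z s, ⟨hzs.1, s, by simp [hs], rfl⟩, hzs.2⟩
  · obtain ⟨s, hs⟩ := hq (i, c, false)
    have hzs := hz s
    rw [hs] at hzs
    refine ⟨z s, ⟨hzs.1, ?_⟩, hzs.2⟩
    rintro ⟨t, ht, hts⟩
    have hqt : (q t).2.2 = true := ht
    rw [hz_mono.injective hts, hs] at hqt
    exact Bool.false_ne_true hqt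

end RegularCardinalOrder

theorem mk_setOf_le_of_mk_fiber_le {β : Type u} {P : β → Prop} {f : β → Ordinal.{u}}
    {δ : Ordinal.{u}} {κ : Cardinal.{u}} (hf : ∀ b, f b < δ) (hδ : δ.card ≤ κ)
    (hκ : ℵ₀ ≤ κ) (h : ∀ o < δ, #{b | P b ∧ f b = o} ≤ κ) : #{b | P b} ≤ κ := by
  refine (mk_le_mk_of_subset fun b hb => ?_).trans (mk_biUnion_le_of_le hδ hκ _ h)
  exact mem_iUnion₂_of_mem (hf b) ⟨hb, rfl⟩

theorem mem_of_inter_mem_of_sdiff_mem {β : Type*} {I : Set (Set β)}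
    (hunion : ∀ X ∈ I, ∀ Y ∈ I, X ∪ Y ∈ I) {X Y : Set β} (hXY : X ∩ Y ∈ I)
    (hXY' : X \ Y ∈ I) : X ∈ I :=
  inter_union_sdiff X Y ▸ hunion _ hXY _ hXY'

theorem statement6_general (κ : Cardinal.{0}) (hκreg : κ.IsRegular)
    (I : Set (Set κ.ord.ToType))
    (hunion : ∀ X ∈ I, ∀ Y ∈ I, X ∪ Y ∈ I)
    (hbdd : ∀ X : Set κ.ord.ToType, Bdd X → X ∈ I)
    (δ : Ordinal) (hδ : δ ≤ κ.ord)
    (D : Set (Set κ.ord.ToType))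
    (hDpos : ∀ X ∈ D, X ∉ I)
    (hdense : ∀ Y : Set κ.ord.ToType, Y ∉ I → ∃ B ∈ D, Bdd (B \ Y))
    (rank : {X // X ∈ D} → Ordinal)
    -- which is less than `δ`: the tree has height at most `δ`
    (hheight : ∀ b, rank b < δ) :
    ∀ A ∈ D, ∃ α < δ,
      Order.succ κ ≤
        #{b : {X // X ∈ D} | Bdd ((b : Set κ.ord.ToType) \ A) ∧ rank b = α} := by
  intro A hA
  by_contra! hsmall
  let T := {b : {X // X ∈ D} | Bdd ((b : Set κ.ord.ToType) \ A)}
  have hT : #T ≤ κ := mk_setOf_le_of_mk_fiber_le hheight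
    ((Ordinal.card_le_card hδ).trans_eq (card_ord κ)) hκreg.aleph0_le
    fun o ho => Order.lt_succ_iff.1 (hsmall o ho)
  have hcof : ∀ b : T, IsCofinal ((b : Set κ.ord.ToType) ∩ A) := fun b =>
    not_bdd_iff_isCofinal.1 fun hb =>
      hDpos _ b.1.2 (mem_of_inter_mem_of_sdiff_mem hunion (hbdd _ hb) (hbdd _ b.2))
  have hκ : #κ.ord.ToType = κ := by rw [mk_toType, card_ord]
  have := hκreg.isRegularCardinalOrder_toType
  obtain ⟨Z, hZ⟩ := exists_isCofinal_inter_and_isCofinal_sdiff (hκreg.aleph0_le.trans_eq hκ.symm)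
    (fun b : T => (b : Set κ.ord.ToType) ∩ A) (hT.trans_eq hκ.symm) hcof
  have hbelow : ∀ Y ⊆ A, Y ∉ I → ∃ b : T, Bdd ((b : Set κ.ord.ToType) \ Y) := by
    intro Y hYA hY
    obtain ⟨B, hB, hBY⟩ := hdense Y hY
    exact ⟨⟨⟨B, hB⟩, Bdd.mono (sdiff_subset_sdiff_right hYA) hBY⟩, hBY⟩
  by_cases hAZ : A ∩ Z ∈ I
  · obtain ⟨b, hb⟩ := hbelow (A \ Z) sdiff_subset
      fun h => hDpos A hA (mem_of_inter_mem_of_sdiff_mem hunion hAZ h)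
    have hbZ : Bdd ((b : Set κ.ord.ToType) ∩ A ∩ Z) :=
      hb.mono <| by rintro x ⟨⟨hxb, -⟩, hxZ⟩; exact ⟨hxb, fun h => h.2 hxZ⟩
    exact not_bdd_iff_isCofinal.2 (hZ b).1 hbZ
  · obtain ⟨b, hb⟩ := hbelow (A ∩ Z) inter_subset_left hAZ
    have hbZ : Bdd (((b : Set κ.ord.ToType) ∩ A) \ Z) :=
      hb.mono <| by rintro x ⟨⟨hxb, -⟩, hxZ⟩; exact ⟨hxb, fun h => hxZ h.2⟩
    exact not_bdd_iff_isCofinal.2 (hZ b).2 hbZ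

theorem statement6 (κ : Cardinal.{0}) (hκreg : κ.IsRegular)
    (I : Set (Set κ.ord.ToType))
    (hdown : ∀ X Y : Set κ.ord.ToType, X ⊆ Y → Y ∈ I → X ∈ I)
    (hunion : ∀ X ∈ I, ∀ Y ∈ I, X ∪ Y ∈ I)
    (hproper : (Set.univ : Set κ.ord.ToType) ∉ I)
    (hbdd : ∀ X : Set κ.ord.ToType, Bdd X → X ∈ I)
    (δ : Ordinal) (hδ : δ ≤ κ.ord)
    (D : Set (Set κ.ord.ToType))
    (hDpos : ∀ X ∈ D, X ∉ I)
    (hdense : ∀ Y : Set κ.ord.ToType, Y ∉ I → ∃ B ∈ D, Bdd (B \ Y))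
    -- `lt` is the strict version of a partial order `≤_T` on `D`
    (lt : {X // X ∈ D} → {X // X ∈ D} → Prop)
    (hirrefl : ∀ b, ¬ lt b b)
    (htrans : ∀ a b c, lt a b → lt b c → lt a c)
    -- `B ≤_T B'` implies `B' ∖ B` is bounded
    (halmost : ∀ a b, lt a b → Bdd ((b : Set κ.ord.ToType) \ (a : Set κ.ord.ToType)))
    -- the strict predecessors of each node are well-ordered by `≤_T` ...
    (hwo : ∀ b : {X // X ∈ D},
      IsWellOrder {c : {X // X ∈ D} // lt c b} (fun x y => lt x.1 y.1))
    -- ... and `rank b` is the order type of the set of strict predecessors of `b`,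
    (rank : {X // X ∈ D} → Ordinal)
    (hrank : ∀ b : {X // X ∈ D},
      rank b = @Ordinal.type {c : {X // X ∈ D} // lt c b} (fun x y => lt x.1 y.1) (hwo b))
    -- which is less than `δ`: the tree has height at most `δ`
    (hheight : ∀ b, rank b < δ) :
    ∀ A ∈ D, ∃ α < δ,
      Order.succ κ ≤
        #{b : {X // X ∈ D} | Bdd ((b : Set κ.ord.ToType) \ A) ∧ rank b = α} :=
  statement6_general κ hκreg I hunion hbdd δ hδ D hDpos hdense rank hheight
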